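/- Suppose A is pointed, i.e., there exists c₀ ∈ ℝ^d with ⟨c₀, a_j⟩ > 0 for all j = 1,…,n. Then for every w ∈ ℝ^n one has pos(A) = ⋃_{τ ∈ T_w} pos(τ); that is, every element of the cone pos(A) is a nonnegative real combination of the columns a_j with j ∈ τ, for some subset τ ∈ T_w. -/

import Mathlib

/-!
For `x ∈ pos(A)` consider the linear program `min ∑ j, λ_j w_j` over `λ ≥ 0` with
`∑ j, λ_j a_j = x`. Pointedness bounds its value from below, and since finitely generated cones
are closed (Carathéodory), the minimum is attained. Farkas' lemma, applied in `ℝ^d × ℝ` to the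
lifted cone spanned by the `(a_j, w_j)`, produces a dual solution `c` with `⟨c, a_j⟩ ≤ w_j` for
all `j`, and complementary slackness forces `⟨c, a_j⟩ = w_j` wherever the optimal `λ_j` is
positive. The equality set `τ` of `c` then lies in `T_w`, and the optimal `λ` exhibits
`x ∈ pos(τ)`.
-/

open Matrix

/-- `τ ∈ T_w`. -/
def memTw {d n : ℕ} (A : Matrix (Fin d) (Fin n) ℤ) (w : Fin n → ℝ)
    (τ : Finset (Fin n)) : Prop :=
  ∃ c : Fin d → ℝ, (∀ j ∈ τ, (∑ i, c i * (A i j : ℝ)) = w j) ∧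
    ∀ j ∉ τ, (∑ i, c i * (A i j : ℝ)) < w j

/-- The cone of nonnegative real combinations of the columns `a_j`, `j ∈ τ`. -/
def posCone {d n : ℕ} (A : Matrix (Fin d) (Fin n) ℤ) (τ : Finset (Fin n)) :
    Set (Fin d → ℝ) :=
  {x | ∃ lam : Fin n → ℝ, (∀ j, 0 ≤ lam j) ∧ x = fun i => ∑ j ∈ τ, lam j * (A i j : ℝ)}

open Set Finset

namespace PointedCone

section Algebraic
variable {E : Type*} [AddCommGroup E] [Module ℝ E]

lemma mem_hull_range_iff {ι : Type*} [Fintype ι] {v : ι → E} {x : E} :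
    x ∈ hull ℝ (range v) ↔ ∃ μ : ι → ℝ, 0 ≤ μ ∧ ∑ j, μ j • v j = x := by
  rw [Submodule.mem_span_range_iff_exists_fun]
  constructor
  · rintro ⟨c, rfl⟩
    exact ⟨fun j => c j, fun j => (c j).2, rfl⟩
  · rintro ⟨μ, hμ, rfl⟩
    exact ⟨fun j => ⟨μ j, hμ j⟩, rfl⟩

lemma mem_hull_finset_iff {s : Finset E} {x : E} :
    x ∈ hull ℝ (s : Set E) ↔ ∃ μ : E → ℝ, (∀ y ∈ s, 0 ≤ μ y) ∧ ∑ y ∈ s, μ y • y = x := by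
  rw [Submodule.mem_span_finset]
  constructor
  · rintro ⟨c, -, rfl⟩
    exact ⟨fun y => c y, fun y _ => (c y).2, rfl⟩
  · rintro ⟨μ, hμ, rfl⟩
    classical
    refine ⟨fun y => if hy : y ∈ s then ⟨μ y, hμ y hy⟩ else 0, ?_, ?_⟩
    · exact fun y hy => by_contra fun hys => hy (dif_neg hys)
    · refine Finset.sum_congr rfl fun y hy => ?_
      simp only [dif_pos hy]
      rfl

/-- Carathéodory's exchange step: move the coefficients along a linear dependence among the
generators until one of them vanishes. -/
lemma exists_mem_hull_erase_of_not_linearIndepOn [DecidableEq E] {s : Finset E} {x : E}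
    (hx : x ∈ hull ℝ (s : Set E)) (hs : ¬LinearIndepOn ℝ id (s : Set E)) :
    ∃ y ∈ s, x ∈ hull ℝ (s.erase y : Set E) := by
  obtain ⟨μ, hμ, rfl⟩ := mem_hull_finset_iff.mp hx
  obtain ⟨g, hg, z, hzs, hgz⟩ := not_linearIndepOn_finset_iff.mp hs
  simp only [id] at hg
  wlog hgz_pos : 0 < g z generalizing g
  · exact this (-g) (neg_ne_zero.2 hgz) (by simp [hg])
      (neg_pos.2 (lt_of_le_of_ne (not_lt.1 hgz_pos) hgz))
  have hT : (s.filter fun y => 0 < g y).Nonempty := ⟨z, mem_filter.2 ⟨hzs, hgz_pos⟩⟩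
  obtain ⟨y, hyT, hy_min⟩ := (s.filter fun y => 0 < g y).exists_min_image (fun y => μ y / g y) hT
  obtain ⟨hys, hgy⟩ := mem_filter.1 hyT
  set t := μ y / g y
  have ht : 0 ≤ t := div_nonneg (hμ y hys) hgy.le
  refine ⟨y, hys, mem_hull_finset_iff.2 ⟨fun a => μ a - t * g a, fun a ha => ?_, ?_⟩⟩
  · have has := mem_of_mem_erase ha
    rcases le_or_gt (g a) 0 with hga | hga
    · nlinarith [hμ a has]
    · have := hy_min a (mem_filter.2 ⟨has, hga⟩)
      rw [le_div_iff₀ hga] at this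
      linarith
  · have hy0 : (μ y - t * g y) • y = 0 := by
      rw [div_mul_cancel₀ _ hgy.ne', sub_self, zero_smul]
    rw [Finset.sum_erase (f := fun a => (μ a - t * g a) • a) s hy0]
    simp only [sub_smul, Finset.sum_sub_distrib, mul_smul, ← Finset.smul_sum, hg, smul_zero,
      sub_zero]

lemma exists_linearIndepOn_subset_of_mem_hull {s : Finset E} {x : E}
    (hx : x ∈ hull ℝ (s : Set E)) :
    ∃ t ⊆ s, LinearIndepOn ℝ id (t : Set E) ∧ x ∈ hull ℝ (t : Set E) := by
  classical
  induction s using Finset.strongInduction with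
  | H s ih =>
    by_cases hs : LinearIndepOn ℝ id (s : Set E)
    · exact ⟨s, subset_rfl, hs, hx⟩
    obtain ⟨y, hy, hxy⟩ := exists_mem_hull_erase_of_not_linearIndepOn hx hs
    obtain ⟨t, hts, ht, hxt⟩ := ih _ (erase_ssubset hy) hxy
    exact ⟨t, hts.trans (erase_subset _ _), ht, hxt⟩

lemma bddBelow_of_forall_pos {ι : Type*} [Finite ι] (v : ι → E) (w : ι → ℝ) (φ : E →ₗ[ℝ] ℝ)
    (hφ : ∀ j, 0 < φ (v j)) (x : E) :
    BddBelow {t | (x, t) ∈ hull ℝ (range fun j => (v j, w j))} := by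
  obtain ⟨K, hK⟩ := (finite_range fun j => -w j / φ (v j)).bddAbove
  have hle : hull ℝ (range fun j => (v j, w j)) ≤
      (positive ℝ ℝ).comap (K • φ.comp (LinearMap.fst ℝ E ℝ) + LinearMap.snd ℝ E ℝ) := by
    refine Submodule.span_le.2 (range_subset_iff.2 fun j => ?_)
    have := hK ⟨j, rfl⟩
    rw [div_le_iff₀ (hφ j)] at this
    simp only [SetLike.mem_coe, mem_comap, mem_positive, LinearMap.add_apply,
      LinearMap.smul_apply, LinearMap.comp_apply, LinearMap.fst_apply, LinearMap.snd_apply,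
      smul_eq_mul]
    linarith
  refine ⟨-(K * φ x), fun t ht => ?_⟩
  have := hle ht
  simp only [mem_comap, mem_positive, LinearMap.add_apply, LinearMap.smul_apply,
    LinearMap.comp_apply, LinearMap.fst_apply, LinearMap.snd_apply, smul_eq_mul] at this
  linarith

end Algebraic

section Topological
variable {E : Type*} [AddCommGroup E] [Module ℝ E] [TopologicalSpace E] [IsTopologicalAddGroup E]
  [ContinuousSMul ℝ E] [T2Space E]

lemma IsSimplicial.isClosed {C : PointedCone ℝ E} (hC : C.IsSimplicial) :
    IsClosed (C : Set E) := by
  obtain ⟨s, hs, hli, rfl⟩ := hC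
  have := hs.fintype
  let L := Fintype.linearCombination ℝ ((↑) : s → E)
  have hL : LinearMap.ker L = ⊥ :=
    LinearMap.ker_eq_bot.2 (LinearIndependent.fintypeLinearCombination_injective hli)
  have hC : (hull ℝ s : Set E) = L '' Ici 0 := by
    ext x
    conv_lhs => rw [SetLike.mem_coe, ← Subtype.range_coe (s := s), mem_hull_range_iff]
    simp [L, Fintype.linearCombination_apply]
  rw [hC]
  exact (L.isClosedEmbedding_of_injective hL).isClosedMap _ isClosed_Ici

/-- By Carathéodory, a finitely generated cone is a finite union of simplicial cones. -/
theorem isClosed_of_fg {C : PointedCone ℝ E} (hC : C.FG) : IsClosed (C : Set E) := by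
  classical
  obtain ⟨S, rfl⟩ := hC
  have hC : (hull ℝ (S : Set E) : Set E) =
      ⋃ (t : Finset E) (_ : t ∈ S.powerset.filter fun t : Finset E =>
        LinearIndepOn ℝ id (t : Set E)), (hull ℝ (t : Set E) : Set E) := by
    ext x
    simp only [SetLike.mem_coe, mem_iUnion, exists_prop, mem_filter, Finset.mem_powerset]
    constructor
    · intro hx
      obtain ⟨t, hts, ht, hxt⟩ := exists_linearIndepOn_subset_of_mem_hull hx
      exact ⟨t, ⟨hts, ht⟩, hxt⟩
    · rintro ⟨t, ⟨hts, -⟩, hxt⟩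
      exact Submodule.span_mono (by exact_mod_cast hts) hxt
  rw [hC]
  exact isClosed_biUnion_finset fun t ht =>
    (IsSimplicial.hull t.finite_toSet (mem_filter.1 ht).2).isClosed

variable [LocallyConvexSpace ℝ E]

theorem exists_dual_le_of_lowest {C : PointedCone ℝ (E × ℝ)} (hC : C.FG) {x : E} {t : ℝ}
    (hxt : (x, t) ∈ C) (hlow : ∀ s < t, (x, s) ∉ C) :
    ∃ g : StrongDual ℝ E, (∀ p ∈ C, g p.1 ≤ p.2) ∧ t ≤ g x := by
  set D : PointedCone ℝ (E × ℝ) := C ⊔ hull ℝ {-(x, t), (0, 1)}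
  have hD : D.FG := hC.sup (Submodule.fg_span (toFinite _))
  -- Farkas' lemma separates `(0, -1)` from `D`. It is not in `D`: writing
  -- `(0, -1) = p - a • (x, t) + b • (0, 1)` with `p ∈ C` would make
  -- `(1 + a)⁻¹ • ((x, t) + p) = (x, t - (1 + b) / (1 + a))` a lower point of `C`.
  have hD_not_mem : ((0 : E), (-1 : ℝ)) ∉ D := by
    intro hmem
    obtain ⟨p, hp, q, hq, hpq⟩ := Submodule.mem_sup.1 hmem
    obtain ⟨⟨a, ha⟩, ⟨b, hb⟩, rfl⟩ := Submodule.mem_span_pair.1 hq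
    have hmemC : (1 + a)⁻¹ • ((x, t) + p) ∈ C := C.smul_mem (by positivity) (C.add_mem hxt hp)
    refine hlow (t - (1 + b) / (1 + a)) (by linarith [show 0 < (1 + b) / (1 + a) by positivity]) ?_
    have h1 : p.1 = a • x := by
      have := congrArg Prod.fst hpq
      simpa [add_neg_eq_zero] using this
    have h2 : p.2 = a * t - 1 - b := by
      have := congrArg Prod.snd hpq
      simp only [Prod.snd_add, Prod.smul_mk, Prod.neg_mk, smul_neg, Nonneg.mk_smul, smul_eq_mul,
        mul_one] at this
      linarith
    convert hmemC using 1
    ext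
    · simp only [Prod.smul_fst, Prod.fst_add, h1]
      match_scalars
      field_simp
    · simp only [Prod.smul_snd, Prod.snd_add, h2, smul_eq_mul]
      field_simp
      ring
  obtain ⟨f, hfD, hf⟩ :=
    ProperCone.hyperplane_separation_point ⟨D, isClosed_of_fg hD⟩ hD_not_mem
  set σ := f (0, 1)
  have hσ : 0 < σ := by
    rw [show ((0 : E), (-1 : ℝ)) = -(0, 1) by simp, map_neg] at hf
    linarith
  have hf_split : ∀ p : E × ℝ, f p = f (p.1, 0) + p.2 * σ := fun p => by
    rw [← smul_eq_mul, ← map_smul, ← map_add]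
    simp
  have hfC : ∀ p ∈ C, 0 ≤ f p := fun p hp => hfD p (Submodule.mem_sup_left hp)
  have hfxt : 0 ≤ f (-(x, t)) :=
    hfD _ (Submodule.mem_sup_right (subset_hull (by simp)))
  set g := -σ⁻¹ • f.comp (ContinuousLinearMap.inl ℝ E ℝ)
  have hg : ∀ y, g y = -f (y, 0) / σ := fun y => by simp [g, div_eq_inv_mul]
  refine ⟨g, fun p hp => ?_, ?_⟩
  · have := hf_split p ▸ hfC p hp
    rw [hg, div_le_iff₀ hσ]
    linarith
  · rw [map_neg, hf_split] at hfxt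
    rw [hg, le_div_iff₀ hσ]
    linarith

/-- Duality with complementary slackness for the linear program `min ∑ j, μ j * w j` over
`μ ≥ 0` with `∑ j, μ j • v j = x`, whose value is the lowest point of the lifted cone over `x`. -/
theorem exists_dual_complementary_of_bddBelow {ι : Type*} [Fintype ι] (v : ι → E) (w : ι → ℝ)
    {x : E} (hx : x ∈ hull ℝ (range v))
    (hbdd : BddBelow {t | (x, t) ∈ hull ℝ (range fun j => (v j, w j))}) :
    ∃ (g : StrongDual ℝ E) (μ : ι → ℝ), 0 ≤ μ ∧ ∑ j, μ j • v j = x ∧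
      (∀ j, g (v j) ≤ w j) ∧ ∀ j, g (v j) < w j → μ j = 0 := by
  set C := hull ℝ (range fun j => (v j, w j))
  have hC : C.FG := Submodule.fg_span (finite_range _)
  set S := {t | (x, t) ∈ C}
  have hS_closed : IsClosed S := (isClosed_of_fg hC).preimage (Continuous.prodMk_right x)
  have hS_ne : S.Nonempty := by
    obtain ⟨μ, hμ, rfl⟩ := mem_hull_range_iff.1 hx
    refine ⟨∑ j, μ j * w j, mem_hull_range_iff.2 ⟨μ, hμ, ?_⟩⟩
    ext <;> simp [Prod.fst_sum, Prod.snd_sum]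
  have hS_min : sInf S ∈ S := hS_closed.csInf_mem hS_ne hbdd
  obtain ⟨g, hgC, hgx⟩ :=
    exists_dual_le_of_lowest hC hS_min fun s hs => notMem_of_lt_csInf (s := S) hs hbdd
  obtain ⟨μ, hμ, hμx⟩ := mem_hull_range_iff.1 hS_min
  have hv : ∑ j, μ j • v j = x := by simpa [Prod.fst_sum] using congrArg Prod.fst hμx
  have hw : ∑ j, μ j * w j = sInf S := by simpa [Prod.snd_sum] using congrArg Prod.snd hμx
  have hgv : ∀ j, g (v j) ≤ w j := fun j => hgC _ (subset_hull ⟨j, rfl⟩)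
  refine ⟨g, μ, hμ, hv, hgv, fun j hj => ?_⟩
  have hslack : ∀ j ∈ Finset.univ, 0 ≤ μ j * (w j - g (v j)) :=
    fun j _ => mul_nonneg (hμ j) (sub_nonneg.2 (hgv j))
  have hsum : ∑ j, μ j * (w j - g (v j)) = 0 := by
    refine le_antisymm ?_ (Finset.sum_nonneg hslack)
    calc ∑ j, μ j * (w j - g (v j)) = sInf S - g x := by
          simp only [mul_sub, Finset.sum_sub_distrib, hw, ← hv, map_sum, map_smul, smul_eq_mul]
      _ ≤ 0 := sub_nonpos.2 hgx
  have := (Finset.sum_eq_zero_iff_of_nonneg hslack).1 hsum j (Finset.mem_univ j)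
  exact (mul_eq_zero.1 this).resolve_right (sub_ne_zero.2 hj.ne')

end Topological

end PointedCone

open PointedCone

section posCone
variable {d n : ℕ} (A : Matrix (Fin d) (Fin n) ℤ)

def realCol (j : Fin n) : Fin d → ℝ := fun i => (A i j : ℝ)

lemma mem_posCone_iff {τ : Finset (Fin n)} {x : Fin d → ℝ} :
    x ∈ posCone A τ ↔
      ∃ lam : Fin n → ℝ, 0 ≤ lam ∧ ∑ j ∈ τ, lam j • realCol A j = x := by
  refine exists_congr fun lam => and_congr Pi.le_def.symm ?_
  rw [eq_comm, funext_iff, funext_iff]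
  simp [realCol, Finset.sum_apply]

lemma posCone_univ : posCone A Finset.univ = (hull ℝ (range (realCol A)) : Set (Fin d → ℝ)) := by
  ext x
  rw [mem_posCone_iff, SetLike.mem_coe, mem_hull_range_iff]

lemma posCone_subset_hull (τ : Finset (Fin n)) :
    posCone A τ ⊆ (hull ℝ (range (realCol A)) : Set (Fin d → ℝ)) := by
  intro x hx
  obtain ⟨lam, hlam, rfl⟩ := (mem_posCone_iff A).1 hx
  exact Submodule.sum_mem _ fun j _ => smul_mem _ (hlam j) (subset_hull (mem_range_self j))

end posCone

theorem stmt_3_general {d n : ℕ} (A : Matrix (Fin d) (Fin n) ℤ)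
    (hpointed : ∃ c₀ : Fin d → ℝ, ∀ j, 0 < ∑ i, c₀ i * (A i j : ℝ))
    (w : Fin n → ℝ) :
    posCone A Finset.univ = ⋃ τ ∈ {τ : Finset (Fin n) | memTw A w τ}, posCone A τ := by
  obtain ⟨c₀, hc₀⟩ := hpointed
  rw [posCone_univ]
  refine Subset.antisymm (fun x hx => ?_) (iUnion₂_subset fun τ _ => posCone_subset_hull A τ)
  obtain ⟨g, μ, hμ, hμx, hg, hslack⟩ := exists_dual_complementary_of_bddBelow (realCol A) w hx
    (bddBelow_of_forall_pos (realCol A) w (dotProductEquiv ℝ (Fin d) c₀) hc₀ x)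
  set c := (dotProductEquiv ℝ (Fin d)).symm (g : Module.Dual ℝ (Fin d → ℝ))
  have hc : ∀ j, ∑ i, c i * (A i j : ℝ) = g (realCol A j) := fun j =>
    LinearMap.congr_fun ((dotProductEquiv ℝ (Fin d)).apply_symm_apply g.toLinearMap) (realCol A j)
  set τ := Finset.univ.filter fun j => g (realCol A j) = w j
  have hτ : ∀ j ∉ τ, g (realCol A j) < w j := fun j hj =>
    (hg j).lt_of_ne fun h => hj (Finset.mem_filter.2 ⟨Finset.mem_univ j, h⟩)
  refine mem_biUnion (x := τ) ⟨c, fun j hj => ?_, fun j hj => ?_⟩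
    ((mem_posCone_iff A).2 ⟨μ, hμ, ?_⟩)
  · rw [hc]
    exact (Finset.mem_filter.1 hj).2
  · rw [hc]
    exact hτ j hj
  · rw [← hμx]
    exact Finset.sum_subset (Finset.subset_univ τ) fun j _ hj => by
      rw [hslack j (hτ j hj), zero_smul]

theorem stmt_3 {d n : ℕ} (A : Matrix (Fin d) (Fin n) ℤ)
    (hrank : (A.map (Int.cast : ℤ → ℝ)).rank = d)
    (hpointed : ∃ c₀ : Fin d → ℝ, ∀ j, 0 < ∑ i, c₀ i * (A i j : ℝ))
    (w : Fin n → ℝ) :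
    posCone A Finset.univ = ⋃ τ ∈ {τ : Finset (Fin n) | memTw A w τ}, posCone A τ :=
  stmt_3_general A hpointed w
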